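/- arXiv:cs/0309053 — 11 statements merged into one kernel-verified Lean document; each statement's English description precedes it below -/
import Mathlib

section
/- Suppose (i) for every action a and aspects α, β, if d(α,β) and a has aspect β, then for all situations s, t, R_α(s,t) ↔ R_α(a(s),t); and (ii) for every fluent p and aspect α, if p has aspect α then there exists a predicate q on situations such that for all s, p(s) ↔ ∃t (q(t) ∧ R_α(s,t)). Then the non-interference axiom holds: for every fluent p, action a, and aspects α, β, if p has aspect α, a has aspect β, and d(α,β), then the frame axiom F[a,p] holds, i.e., for all s, p(s) ↔ p(a(s)). -/
theorem exists_and_rel_iff_of_rel_iff {S : Type*} {R : S → S → Prop} {a : S → S}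
    (hR : ∀ s t, R s t ↔ R (a s) t) (q : S → Prop) (s : S) :
    (∃ t, q t ∧ R s t) ↔ ∃ t, q t ∧ R (a s) t :=
  exists_congr fun t => and_congr_right' (hR s t)

/-- Relational formalism (existential version): the non-interference axiom
follows from the two relational axioms. -/
theorem relational_existential_noninterference
    {S A : Type*} (R : A → S → S → Prop) (d : A → A → Prop)
    (fluentAspect : (S → Prop) → A → Prop) (actionAspect : (S → S) → A → Prop)
    (h1 : ∀ (a : S → S) (α β : A), d α β → actionAspect a β →
      ∀ s t : S, R α s t ↔ R α (a s) t)
    (h2 : ∀ (p : S → Prop) (α : A), fluentAspect p α →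
      ∃ q : S → Prop, ∀ s : S, p s ↔ ∃ t : S, q t ∧ R α s t) :
    ∀ (p : S → Prop) (a : S → S) (α β : A),
      fluentAspect p α → actionAspect a β → d α β →
      ∀ s : S, p s ↔ p (a s) := by
  intro p a α β hp ha hd s
  obtain ⟨q, hq⟩ := h2 p α hp
  rw [hq, hq]
  exact exists_and_rel_iff_of_rel_iff (h1 a α β hd ha) q s
end

section
/- Suppose (i) for every action a and aspects α, β, if d(α,β) and a has aspect β, then for all situations s, t, R_α(s,t) ↔ R_α(a(s),t); and (ii) for every fluent p and aspect α, if p has aspect α then there exists a predicate q on situations such that for all s, p(s) ↔ ∀t (R_α(s,t) → q(t)). Then the non-interference axiom holds: for every fluent p, action a, and aspects α, β, if p has aspect α, a has aspect β, and d(α,β), then the frame axiom F[a,p] holds. -/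
/-- Relational formalism (universal version): the non-interference axiom
follows from the two relational axioms. -/
theorem relational_universal_noninterference
    {S A : Type*} (R : A → S → S → Prop) (d : A → A → Prop)
    (fluentAspect : (S → Prop) → A → Prop) (actionAspect : (S → S) → A → Prop)
    (h1 : ∀ (a : S → S) (α β : A), d α β → actionAspect a β →
      ∀ s t : S, R α s t ↔ R α (a s) t)
    (h2 : ∀ (p : S → Prop) (α : A), fluentAspect p α →
      ∃ q : S → Prop, ∀ s : S, p s ↔ ∀ t : S, R α s t → q t) :
    ∀ (p : S → Prop) (a : S → S) (α β : A),
      fluentAspect p α → actionAspect a β → d α β →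
      ∀ s : S, p s ↔ p (a s) := by
  intro p a α β hp ha hd s
  obtain ⟨q, hq⟩ := h2 p α hp
  rw [hq, hq]
  exact forall_congr' fun t => imp_congr_left (h1 a α β hd ha s t)
end

section
/- Suppose (i) for every action a and aspect sequences ᾱ, β̄, if d(ᾱ,β̄) and a has aspect sequence β̄, then for all situations s, t, R_ᾱ(s,t) ↔ R_ᾱ(a(s),t); and (ii) for every fluent p and aspect sequence ᾱ, if p has aspect sequence ᾱ then there exists a predicate q on situations such that for all s, p(s) ↔ ∃t (q(t) ∧ R_ᾱ(s,t)). Then the sequential non-interference axiom holds: for every fluent p, action a, and aspect sequences ᾱ, β̄, if p has aspect sequence ᾱ, a has aspect sequence β̄, and d(ᾱ,β̄), then the frame axiom F[a,p] holds, i.e., for all s, p(s) ↔ p(a(s)). -/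
/-- `RSeq R αs s t` : `t` is an `αs`-aspect of `s`, where `αs` is a sequence of
aspects; defined by composition, with the empty sequence giving the identity
relation and a one-element sequence `[α]` giving `R α`. -/
def RSeq {S A : Type*} (R : A → S → S → Prop) : List A → S → S → Prop
  | [], s, t => s = t
  | α :: rest, s, t => ∃ u : S, R α s u ∧ RSeq R rest u t

/-- Sequential relational formalism (existential version): the sequential
non-interference axiom follows from the two axioms. -/
theorem seq_relational_existential_noninterference
    {S A : Type*} (R : A → S → S → Prop) (d : List A → List A → Prop)
    (fluentAspect : (S → Prop) → List A → Prop)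
    (actionAspect : (S → S) → List A → Prop)
    (h1 : ∀ (a : S → S) (αs βs : List A), d αs βs → actionAspect a βs →
      ∀ s t : S, RSeq R αs s t ↔ RSeq R αs (a s) t)
    (h2 : ∀ (p : S → Prop) (αs : List A), fluentAspect p αs →
      ∃ q : S → Prop, ∀ s : S, p s ↔ ∃ t : S, q t ∧ RSeq R αs s t) :
    ∀ (p : S → Prop) (a : S → S) (αs βs : List A),
      fluentAspect p αs → actionAspect a βs → d αs βs →
      ∀ s : S, p s ↔ p (a s) := by
  intro p a αs βs hp ha hd s
  obtain ⟨q, hq⟩ := h2 p αs hp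
  rw [hq, hq]
  exact exists_congr fun t => and_congr_right' (h1 a αs βs hd ha s t)
end

section
/- Suppose (i) for every action a and aspect sequences ᾱ, β̄, if d(ᾱ,β̄) and a has aspect sequence β̄, then for all situations s, t, R_ᾱ(s,t) ↔ R_ᾱ(a(s),t); and (ii) for every fluent p and aspect sequence ᾱ, if p has aspect sequence ᾱ then there exists a predicate q on situations such that for all s, p(s) ↔ ∀t (R_ᾱ(s,t) → q(t)). Then the sequential non-interference axiom holds: for every fluent p, action a, and aspect sequences ᾱ, β̄, if p has aspect sequence ᾱ, a has aspect sequence β̄, and d(ᾱ,β̄), then the frame axiom F[a,p] holds. -/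
/-- Sequential relational formalism (universal version): the sequential
non-interference axiom follows from the two axioms. -/
theorem seq_relational_universal_noninterference
    {S A : Type*} (R : A → S → S → Prop) (d : List A → List A → Prop)
    (fluentAspect : (S → Prop) → List A → Prop)
    (actionAspect : (S → S) → List A → Prop)
    (h1 : ∀ (a : S → S) (αs βs : List A), d αs βs → actionAspect a βs →
      ∀ s t : S, RSeq R αs s t ↔ RSeq R αs (a s) t)
    (h2 : ∀ (p : S → Prop) (αs : List A), fluentAspect p αs →
      ∃ q : S → Prop, ∀ s : S, p s ↔ ∀ t : S, RSeq R αs s t → q t) :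
    ∀ (p : S → Prop) (a : S → S) (αs βs : List A),
      fluentAspect p αs → actionAspect a βs → d αs βs →
      ∀ s : S, p s ↔ p (a s) := by
  intro p a αs βs hp ha hd s
  obtain ⟨q, hq⟩ := h2 p αs hp
  rw [hq, hq]
  exact forall_congr' fun t => imp_congr_left (h1 a αs βs hd ha s t)
end

section
/- Suppose (i) for every action a and aspect sequences ᾱ, β̄, if d(ᾱ,β̄) and a has aspect sequence β̄, then for all situations s, f_ᾱ(s) = f_ᾱ(a(s)); and (ii) for every fluent p and aspect sequence ᾱ, if p has aspect sequence ᾱ then there exists a predicate q on situations such that for all s, p(s) ↔ q(f_ᾱ(s)). Then the sequential non-interference axiom holds: for every fluent p, action a, and aspect sequences ᾱ, β̄, if p has aspect sequence ᾱ, a has aspect sequence β̄, and d(ᾱ,β̄), then the frame axiom F[a,p] holds. -/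
/-- `fSeq f αs` : the composition `f_{αₙ} ∘ ⋯ ∘ f_{α₁}` for the list
`αs = (α₁, …, αₙ)`, with the empty list giving the identity function. -/
def fSeq {S A : Type*} (f : A → S → S) : List A → S → S
  | [], s => s
  | α :: rest, s => fSeq f rest (f α s)

/-- Sequential functional formalism: the sequential non-interference axiom
follows from the two axioms. -/
theorem seq_functional_noninterference
    {S A : Type*} (f : A → S → S) (d : List A → List A → Prop)
    (fluentAspect : (S → Prop) → List A → Prop)
    (actionAspect : (S → S) → List A → Prop)
    (h1 : ∀ (a : S → S) (αs βs : List A), d αs βs → actionAspect a βs →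
      ∀ s : S, fSeq f αs s = fSeq f αs (a s))
    (h2 : ∀ (p : S → Prop) (αs : List A), fluentAspect p αs →
      ∃ q : S → Prop, ∀ s : S, p s ↔ q (fSeq f αs s)) :
    ∀ (p : S → Prop) (a : S → S) (αs βs : List A),
      fluentAspect p αs → actionAspect a βs → d αs βs →
      ∀ s : S, p s ↔ p (a s) := by
  intro p a αs βs hp ha hd s
  obtain ⟨q, hq⟩ := h2 p αs hp
  rw [hq, hq, h1 a αs βs hd ha s]
end

section
/- Suppose (i) for every action a, element x, and aspect set β, if x ∉ β and a has aspect β, then for all situations s, t, R_x(s,t) ↔ R_x(a(s),t); and (ii) for every fluent p and aspect set α, if p has aspect α then there exists a family of predicates q_x on situations such that for all s, p(s) ↔ ∀x ∈ α, ∃t (q_x(t) ∧ R_x(s,t)). Then for every fluent p, action a, and aspect sets α, β with α ∩ β = ∅, if p has aspect α and a has aspect β, the frame axiom F[a,p] holds, i.e., for all s, p(s) ↔ p(a(s)). -/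
theorem forall_mem_exists_and_rel_congr {S 𝒜 : Type*} (R : 𝒜 → S → S → Prop)
    (q : 𝒜 → S → Prop) (α : Set 𝒜) {s s' : S}
    (h : ∀ x ∈ α, ∀ t, R x s t ↔ R x s' t) :
    (∀ x ∈ α, ∃ t, q x t ∧ R x s t) ↔ ∀ x ∈ α, ∃ t, q x t ∧ R x s' t :=
  forall₂_congr fun x hx => exists_congr fun t => and_congr_right' (h x hx t)

/-- Collective relational formalism (existential version): the frame axiom
holds for fluents and actions with disjoint aspect sets. -/
theorem collective_relational_existential_noninterference
    {S 𝒜 : Type*} (R : 𝒜 → S → S → Prop)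
    (fluentAspect : (S → Prop) → Set 𝒜 → Prop)
    (actionAspect : (S → S) → Set 𝒜 → Prop)
    (h1 : ∀ (a : S → S) (x : 𝒜) (β : Set 𝒜), x ∉ β → actionAspect a β →
      ∀ s t : S, R x s t ↔ R x (a s) t)
    (h2 : ∀ (p : S → Prop) (α : Set 𝒜), fluentAspect p α →
      ∃ q : 𝒜 → S → Prop, ∀ s : S,
        p s ↔ ∀ x ∈ α, ∃ t : S, q x t ∧ R x s t) :
    ∀ (p : S → Prop) (a : S → S) (α β : Set 𝒜), α ∩ β = ∅ →
      fluentAspect p α → actionAspect a β →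
      ∀ s : S, p s ↔ p (a s) := by
  intro p a α β hαβ hp ha s
  obtain ⟨q, hq⟩ := h2 p α hp
  have hα_notMem_β : ∀ x ∈ α, x ∉ β :=
    Set.disjoint_left.mp (Set.disjoint_iff_inter_eq_empty.mpr hαβ)
  rw [hq, hq]
  exact forall_mem_exists_and_rel_congr R q α fun x hx => h1 a x β (hα_notMem_β x hx) ha s
end

section
/- Suppose (i) for every action a, element x, and aspect set β, if x ∉ β and a has aspect β, then for all situations s, t, R_x(s,t) ↔ R_x(a(s),t); and (ii) for every fluent p and aspect set α, if p has aspect α then there exists a family of predicates q_x on situations such that for all s, p(s) ↔ ∀x ∈ α, ∀t (R_x(s,t) → q_x(t)). Then for every fluent p, action a, and aspect sets α, β with α ∩ β = ∅, if p has aspect α and a has aspect β, the frame axiom F[a,p] holds. -/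
/- A fluent with aspect α is a universal condition on the R_x-successors of a situation for
x ∈ α, and an action whose aspect avoids α leaves each of those successor sets unchanged. -/

section RelationalFrame

variable {S 𝒜 : Type*} (R : 𝒜 → S → S → Prop)

theorem forall_rel_imp_iff_of_rel_iff {α : Set 𝒜} (q : 𝒜 → S → Prop) {s s' : S}
    (hR : ∀ x ∈ α, ∀ t, R x s t ↔ R x s' t) :
    (∀ x ∈ α, ∀ t, R x s t → q x t) ↔ ∀ x ∈ α, ∀ t, R x s' t → q x t :=
  forall₂_congr fun x hx => forall_congr' fun t => imp_congr_left (hR x hx t)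

theorem iff_comp_of_rel_iff {α : Set 𝒜} {p : S → Prop} {a : S → S}
    (hp : ∃ q : 𝒜 → S → Prop, ∀ s, p s ↔ ∀ x ∈ α, ∀ t, R x s t → q x t)
    (ha : ∀ x ∈ α, ∀ s t, R x s t ↔ R x (a s) t) (s : S) :
    p s ↔ p (a s) := by
  obtain ⟨q, hq⟩ := hp
  rw [hq, hq]
  exact forall_rel_imp_iff_of_rel_iff R q fun x hx => ha x hx s

end RelationalFrame

/-- Collective relational formalism (universal version): the frame axiom
holds for fluents and actions with disjoint aspect sets. -/
theorem collective_relational_universal_noninterference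
    {S 𝒜 : Type*} (R : 𝒜 → S → S → Prop)
    (fluentAspect : (S → Prop) → Set 𝒜 → Prop)
    (actionAspect : (S → S) → Set 𝒜 → Prop)
    (h1 : ∀ (a : S → S) (x : 𝒜) (β : Set 𝒜), x ∉ β → actionAspect a β →
      ∀ s t : S, R x s t ↔ R x (a s) t)
    (h2 : ∀ (p : S → Prop) (α : Set 𝒜), fluentAspect p α →
      ∃ q : 𝒜 → S → Prop, ∀ s : S,
        p s ↔ ∀ x ∈ α, ∀ t : S, R x s t → q x t) :
    ∀ (p : S → Prop) (a : S → S) (α β : Set 𝒜), α ∩ β = ∅ →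
      fluentAspect p α → actionAspect a β →
      ∀ s : S, p s ↔ p (a s) := by
  intro p a α β hdisj hp ha
  have hαβ : Disjoint α β := Set.disjoint_iff_inter_eq_empty.mpr hdisj
  exact iff_comp_of_rel_iff R (h2 p α hp)
    fun x hx => h1 a x β (Set.disjoint_left.mp hαβ hx) ha
end

section
/- Suppose (i) for every action a, element x, and aspect set β, if x ∉ β and a has aspect β, then for all situations s, f_x(s) = f_x(a(s)); and (ii) for every fluent p and aspect set α, if p has aspect α then there exists a family of predicates q_x on situations such that for all s, p(s) ↔ ∀x ∈ α, q_x(f_x(s)). Then for every fluent p, action a, and aspect sets α, β with α ∩ β = ∅, if p has aspect α and a has aspect β, the frame axiom F[a,p] holds, i.e., for all s, p(s) ↔ p(a(s)). -/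
theorem iff_of_eqOn_components {S 𝒜 : Type*} {f : 𝒜 → S → S} {p : S → Prop} {α : Set 𝒜}
    {q : 𝒜 → S → Prop} (hq : ∀ s : S, p s ↔ ∀ x ∈ α, q x (f x s)) {s t : S}
    (hst : ∀ x ∈ α, f x s = f x t) : p s ↔ p t := by
  rw [hq s, hq t]
  exact forall₂_congr fun x hx => by rw [hst x hx]

/-- Collective functional formalism: the frame axiom holds for fluents and
actions with disjoint aspect sets. -/
theorem collective_functional_noninterference
    {S 𝒜 : Type*} (f : 𝒜 → S → S)
    (fluentAspect : (S → Prop) → Set 𝒜 → Prop)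
    (actionAspect : (S → S) → Set 𝒜 → Prop)
    (h1 : ∀ (a : S → S) (x : 𝒜) (β : Set 𝒜), x ∉ β → actionAspect a β →
      ∀ s : S, f x s = f x (a s))
    (h2 : ∀ (p : S → Prop) (α : Set 𝒜), fluentAspect p α →
      ∃ q : 𝒜 → S → Prop, ∀ s : S, p s ↔ ∀ x ∈ α, q x (f x s)) :
    ∀ (p : S → Prop) (a : S → S) (α β : Set 𝒜), α ∩ β = ∅ →
      fluentAspect p α → actionAspect a β →
      ∀ s : S, p s ↔ p (a s) := by
  intro p a α β hdisj hp ha s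
  obtain ⟨q, hq⟩ := h2 p α hp
  refine iff_of_eqOn_components hq fun x hx => h1 a x β ?_ ha s
  exact Set.disjoint_left.mp (Set.disjoint_iff_inter_eq_empty.mpr hdisj) hx
end

section
/- Suppose (i) for every action a and aspects α, β, if d(α,β) and a has aspect β, then for every proposition X (predicate on worlds) and every world s, (⟨α⟩X)(s) ↔ (⟨α⟩X)(a(s)); and (ii) for every fluent p and aspect α, if p has aspect α then there exists a proposition q such that for all worlds s, p(s) ↔ (⟨α⟩q)(s). Then the non-interference axiom holds: for every fluent p, action a, and aspects α, β, if p has aspect α, a has aspect β, and d(α,β), then for all worlds s, p(s) ↔ p(a(s)) (i.e., p ≡ [a]p). -/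
/-- The modal operator `⟨α⟩` determined by the accessibility relation `R α`:
`(Dia R α X) s` holds iff `X` holds in some world `R α`-accessible from `s`. -/
def Dia {S A : Type*} (R : A → S → S → Prop) (α : A) (X : S → Prop) : S → Prop :=
  fun s => ∃ t : S, R α s t ∧ X t

/-- Simple modal formalism, `⟨⟩` version: the non-interference axiom follows
from the two modal axioms. -/
theorem modal_dia_noninterference
    {S A : Type*} (R : A → S → S → Prop) (d : A → A → Prop)
    (fluentAspect : (S → Prop) → A → Prop) (actionAspect : (S → S) → A → Prop)
    (h1 : ∀ (a : S → S) (α β : A), d α β → actionAspect a β →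
      ∀ (X : S → Prop) (s : S), Dia R α X s ↔ Dia R α X (a s))
    (h2 : ∀ (p : S → Prop) (α : A), fluentAspect p α →
      ∃ q : S → Prop, ∀ s : S, p s ↔ Dia R α q s) :
    ∀ (p : S → Prop) (a : S → S) (α β : A),
      fluentAspect p α → actionAspect a β → d α β →
      ∀ s : S, p s ↔ p (a s) := by
  intro p a α β hp ha hd s
  obtain ⟨q, hq⟩ := h2 p α hp
  rw [hq, hq, h1 a α β hd ha q s]
end

section
/- Suppose (i) for every action a and aspect sequences ᾱ, β̄, if d(ᾱ,β̄) and a has aspect sequence β̄, then for every proposition X and every world s, ([ᾱ]X)(s) ↔ ([ᾱ]X)(a(s)); and (ii) for every fluent p and aspect sequence ᾱ, if p has aspect sequence ᾱ then there exists a proposition q such that for all worlds s, p(s) ↔ ([ᾱ]q)(s). Then the sequential non-interference axiom holds: for every fluent p, action a, and aspect sequences ᾱ, β̄, if p has aspect sequence ᾱ, a has aspect sequence β̄, and d(ᾱ,β̄), then for all worlds s, p(s) ↔ p(a(s)). -/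
/-- The modal operator `[α]` determined by the accessibility relation `R α`. -/
def Box {S A : Type*} (R : A → S → S → Prop) (α : A) (X : S → Prop) : S → Prop :=
  fun s => ∀ t : S, R α s t → X t

/-- `[αs]X = [α₁][α₂]⋯[αₙ]X` for a list `αs = (α₁,…,αₙ)`, with the empty list
giving the identity operator. -/
def BoxSeq {S A : Type*} (R : A → S → S → Prop) : List A → (S → Prop) → S → Prop
  | [], X => X
  | α :: rest, X => Box R α (BoxSeq R rest X)

/-- Sequential modal formalism, `[]` version: the sequential
non-interference axiom follows from the two modal axioms. -/
theorem seq_modal_box_noninterference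
    {S A : Type*} (R : A → S → S → Prop) (d : List A → List A → Prop)
    (fluentAspect : (S → Prop) → List A → Prop)
    (actionAspect : (S → S) → List A → Prop)
    (h1 : ∀ (a : S → S) (αs βs : List A), d αs βs → actionAspect a βs →
      ∀ (X : S → Prop) (s : S), BoxSeq R αs X s ↔ BoxSeq R αs X (a s))
    (h2 : ∀ (p : S → Prop) (αs : List A), fluentAspect p αs →
      ∃ q : S → Prop, ∀ s : S, p s ↔ BoxSeq R αs q s) :
    ∀ (p : S → Prop) (a : S → S) (αs βs : List A),
      fluentAspect p αs → actionAspect a βs → d αs βs →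
      ∀ s : S, p s ↔ p (a s) := by
  intro p a αs βs hp ha hd s
  obtain ⟨q, hq⟩ := h2 p αs hp
  rw [hq, hq, h1 a αs βs hd ha]
end

section
/- Let x and y be aspects with x ≠ y, and let d on pairs of aspect sequences be defined by: d(ᾱ,β̄) holds iff there exists an index i with i < length(ᾱ), i < length(β̄), and ᾱᵢ ≠ β̄ᵢ. Suppose (i) for every action a and aspect sequences ᾱ, β̄, if d(ᾱ,β̄) and a has aspect sequence β̄, then for all situations s, t, R_ᾱ(s,t) ↔ R_ᾱ(a(s),t); (ii) the commutative constraint holds: for all situations s, t and aspects α₁, α₂, R_{α₁,α₂}(s,t) ↔ R_{α₂,α₁}(s,t); (iii) the action a has aspect sequence (x,y); and (iv) the fluent p admits an existential representation over (x,y), i.e., there exists a predicate q such that for all s, p(s) ↔ ∃t (q(t) ∧ R_{x,y}(s,t)). Then the frame axiom F[a,p] holds: for all s, p(s) ↔ p(a(s)). -/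
theorem d_cons_cons_of_ne {A : Type*} (d : List A → List A → Prop)
    (hd : ∀ αs βs : List A, d αs βs ↔
      ∃ (i : ℕ) (hα : i < αs.length) (hβ : i < βs.length),
        αs.get ⟨i, hα⟩ ≠ βs.get ⟨i, hβ⟩)
    {α β : A} (hαβ : α ≠ β) (αs βs : List A) : d (α :: αs) (β :: βs) :=
  (hd _ _).mpr ⟨0, by simp, by simp, hαβ⟩

theorem frame_of_exists_rel_iff {S : Type*} {a : S → S} {p q : S → Prop}
    {P : S → S → Prop} (hp : ∀ s, p s ↔ ∃ t, q t ∧ P s t)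
    (hP : ∀ s t, P s t ↔ P (a s) t) (s : S) : p s ↔ p (a s) := by
  rw [hp, hp]
  exact exists_congr fun t => and_congr_right fun _ => hP s t

/-- In the existential sequential relational formalism with the commutative
constraint, for an action `a` of aspect sequence `(x,y)` (with `x ≠ y`) and a
fluent `p` with an existential representation over `(x,y)`, the frame axiom
`F[a,p]` is derivable. -/
theorem commutative_constraint_frame_axiom
    {S A : Type*} (R : A → S → S → Prop) (d : List A → List A → Prop)
    (actionAspect : (S → S) → List A → Prop)
    (x y : A) (hxy : x ≠ y)
    (hd : ∀ αs βs : List A, d αs βs ↔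
      ∃ (i : ℕ) (hα : i < αs.length) (hβ : i < βs.length),
        αs.get ⟨i, hα⟩ ≠ βs.get ⟨i, hβ⟩)
    (a : S → S) (p : S → Prop)
    (h1 : ∀ (a' : S → S) (αs βs : List A), d αs βs → actionAspect a' βs →
      ∀ s t : S, RSeq R αs s t ↔ RSeq R αs (a' s) t)
    (hcomm : ∀ (s t : S) (α₁ α₂ : A),
      RSeq R [α₁, α₂] s t ↔ RSeq R [α₂, α₁] s t)
    (ha : actionAspect a [x, y])
    (hp : ∃ q : S → Prop, ∀ s : S, p s ↔ ∃ t : S, q t ∧ RSeq R [x, y] s t) :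
    ∀ s : S, p s ↔ p (a s) := by
  obtain ⟨q, hq⟩ := hp
  have hyx : ∀ s t, RSeq R [y, x] s t ↔ RSeq R [y, x] (a s) t :=
    h1 a [y, x] [x, y] (d_cons_cons_of_ne d hd hxy.symm [x] [y]) ha
  refine frame_of_exists_rel_iff hq fun s t => ?_
  calc RSeq R [x, y] s t ↔ RSeq R [y, x] s t := hcomm s t x y
    _ ↔ RSeq R [y, x] (a s) t := hyx s t
    _ ↔ RSeq R [x, y] (a s) t := hcomm (a s) t y x
end
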